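/- For every real σ with 0 < σ < 1 and every real t, one has ζ(σ + it) = 0 if and only if ∫_{-∞}^∞ e^{itx} V_σ(x) dx = 0. -/

import Mathlib

open Complex MeasureTheory Set Asymptotics

/-!
For `1 < Re s`, expanding `1 / (1 + e^u) = ∑ (-1)^n e^{-(n+1)u}` and integrating termwise
gives `∫₀^∞ u^{s-1} / (1 + e^u) du = Γ(s) η(s) = Γ(s) (1 - 2^{1-s}) ζ(s)`. Both sides are
holomorphic on the connected set `{0 < Re s} \ {1}`, so the identity persists there. The
substitution `u = e^x` turns the Fourier integral of `V_σ` at `t` into this Mellin transform at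
`s = σ + it`, and for `0 < σ < 1` neither `Γ(s)` nor `1 - 2^{1-s}` vanishes.
-/

lemma hasSum_alternating_one_div_nat_add_one_cpow {s : ℂ} (hs : 1 < s.re) :
    HasSum (fun n : ℕ ↦ (-1) ^ n / (n + 1 : ℂ) ^ s) ((1 - 2 ^ (1 - s)) * riemannZeta s) := by
  set f : ℕ → ℂ := fun n ↦ 1 / (n + 1 : ℂ) ^ s
  have hf : HasSum f (riemannZeta s) := by
    rw [zeta_eq_tsum_one_div_nat_add_one_cpow hs]
    refine Summable.hasSum ?_
    simpa [f] using (summable_nat_add_iff 1).mpr (Complex.summable_one_div_nat_cpow.mpr hs)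
  obtain ⟨e, he⟩ : Summable fun k ↦ f (2 * k) :=
    hf.summable.comp_injective (mul_right_injective₀ two_ne_zero)
  have hodd : HasSum (fun k ↦ f (2 * k + 1)) (2 ^ (-s) * riemannZeta s) := by
    refine (hf.mul_left (2 ^ (-s))).congr_fun fun k ↦ ?_
    have : ((2 * k + 1 : ℕ) + 1 : ℂ) = ((2 : ℕ) * (k + 1 : ℕ) : ℂ) := by push_cast; ring
    simp only [f, this, natCast_mul_natCast_cpow, cpow_neg]
    push_cast
    field_simp
  have hζ : riemannZeta s = e + 2 ^ (-s) * riemannZeta s := hf.unique (he.even_add_odd hodd)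
  have heta : (1 - 2 ^ (1 - s)) * riemannZeta s = e + -(2 ^ (-s) * riemannZeta s) := by
    rw [sub_eq_add_neg 1 s, cpow_add _ _ two_ne_zero, cpow_one]
    linear_combination hζ
  rw [heta]
  refine HasSum.even_add_odd ?_ ?_
  · simpa [pow_mul, f] using he
  · simpa [pow_succ, pow_mul, f, neg_div] using hodd.neg

lemma hasSum_inv_one_add_exp {u : ℝ} (hu : 0 < u) :
    HasSum (fun n : ℕ ↦ (-1) ^ n * Real.exp (-(n + 1) * u)) (1 + Real.exp u)⁻¹ := by
  have hq : ‖-Real.exp (-u)‖ < 1 := by simpa using hu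
  have hsum : (1 + Real.exp u)⁻¹ = Real.exp (-u) * (1 - -Real.exp (-u))⁻¹ := by
    rw [sub_neg_eq_add, Real.exp_neg]
    field_simp
    ring
  rw [hsum]
  refine ((hasSum_geometric_of_norm_lt_one hq).mul_left (Real.exp (-u))).congr_fun fun n ↦ ?_
  rw [neg_pow (Real.exp (-u)), ← Real.exp_nat_mul, mul_left_comm, ← Real.exp_add]
  ring_nf

lemma mellin_inv_one_add_exp_of_one_lt_re {s : ℂ} (hs : 1 < s.re) :
    mellin (fun u : ℝ ↦ (((1 + Real.exp u)⁻¹ : ℝ) : ℂ)) s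
      = Gamma s * (1 - 2 ^ (1 - s)) * riemannZeta s := by
  have hF (u : ℝ) (hu : u ∈ Ioi 0) :
      HasSum (fun n : ℕ ↦ (-1 : ℂ) ^ n * Real.exp (-(n + 1) * u))
        (((1 + Real.exp u)⁻¹ : ℝ) : ℂ) := by
    exact_mod_cast hasSum_ofReal.mpr (hasSum_inv_one_add_exp hu)
  have hsum := hasSum_mellin (p := fun n : ℕ ↦ n + 1) (fun n ↦ Or.inr (by positivity))
    (by linarith) hF ?_
  · rw [mul_assoc]
    refine hsum.unique
      (((hasSum_alternating_one_div_nat_add_one_cpow hs).mul_left _).congr_fun fun n ↦ ?_)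
    push_cast
    ring
  · simpa using (summable_nat_add_iff 1).mpr (Real.summable_one_div_nat_rpow.mpr hs)

lemma differentiableAt_mellin_inv_one_add_exp {s : ℂ} (hs : 0 < s.re) :
    DifferentiableAt ℂ (mellin fun u : ℝ ↦ (((1 + Real.exp u)⁻¹ : ℝ) : ℂ)) s := by
  have hcont : Continuous fun u : ℝ ↦ (((1 + Real.exp u)⁻¹ : ℝ) : ℂ) :=
    continuous_ofReal.comp <| (continuous_const.add Real.continuous_exp).inv₀ fun u ↦
      (by positivity : (0 : ℝ) < 1 + Real.exp u).ne'
  refine mellin_differentiableAt_of_isBigO_rpow_exp (a := 1) (b := 0) one_pos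
    (hcont.locallyIntegrable.locallyIntegrableOn _) (isBigO_of_le _ fun u ↦ ?_)
    (isBigO_of_le _ fun u ↦ ?_) hs
  · rw [norm_real, norm_inv, Real.norm_of_nonneg (by positivity),
      Real.norm_of_nonneg (by positivity), neg_one_mul, Real.exp_neg]
    exact inv_anti₀ (Real.exp_pos u) (by linarith)
  · rw [norm_real, norm_inv, Real.norm_of_nonneg (by positivity), neg_zero, Real.rpow_zero,
      norm_one]
    exact inv_le_one_of_one_le₀ (by linarith [Real.exp_pos u])

-- Removing the ray `[1, ∞)` leaves a set star-shaped about `1/2`; the half-plane `1 < re s`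
-- puts the rest of the ray back.
lemma isPreconnected_re_pos_diff_one : IsPreconnected ({s : ℂ | 0 < s.re} \ {1}) := by
  have hslit : IsPreconnected ({s : ℂ | 0 < s.re} ∩ (1 - ·) ⁻¹' slitPlane) := by
    let f : ℂ →ᵃ[ℝ] ℂ := AffineMap.const ℝ ℂ 1 -ᵥ AffineMap.id ℝ ℂ
    have hf : f 2⁻¹ = ((2⁻¹ : ℝ) : ℂ) := by simp [f]; norm_num
    have hmem : (2⁻¹ : ℂ) ∈ {s : ℂ | 0 < s.re} ∩ f ⁻¹' slitPlane :=
      ⟨by simp, by rw [mem_preimage, hf, ofReal_mem_slitPlane]; norm_num⟩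
    exact (((convex_halfSpace_re_gt 0).starConvex hmem.1).inter
      ((hf ▸ starConvex_ofReal_slitPlane (by norm_num)).affine_preimage f)).isPathConnected
      hmem |>.isConnected.isPreconnected
  have hU : {s : ℂ | 0 < s.re} \ {1}
      = ({s : ℂ | 0 < s.re} ∩ (1 - ·) ⁻¹' slitPlane) ∪ {s | 1 < s.re} := by
    ext s
    simp only [mem_sdiff, mem_ofPred_eq, mem_singleton_iff, Complex.ext_iff, one_re, one_im, not_and,
      mem_union, mem_inter_iff, mem_preimage, mem_slitPlane_iff, sub_re, sub_pos, sub_im, zero_sub,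
      ne_eq, neg_eq_zero]
    grind
  rw [hU]
  exact hslit.union (2 + I) (by simp [mem_slitPlane_iff]) (by simp)
    (convex_halfSpace_re_gt 1).isPreconnected

lemma mellin_inv_one_add_exp {s : ℂ} (hs : 0 < s.re) (hs1 : s ≠ 1) :
    mellin (fun u : ℝ ↦ (((1 + Real.exp u)⁻¹ : ℝ) : ℂ)) s
      = Gamma s * (1 - 2 ^ (1 - s)) * riemannZeta s := by
  have hU : IsOpen ({s : ℂ | 0 < s.re} \ {1}) :=
    (isOpen_lt continuous_const continuous_re).sdiff isClosed_singleton
  have hGamma {z : ℂ} (hz : 0 < z.re) : DifferentiableAt ℂ Gamma z :=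
    differentiableAt_Gamma z fun m h ↦ by
      rw [h, neg_re, natCast_re] at hz
      linarith [m.cast_nonneg (α := ℝ)]
  refine AnalyticOnNhd.eqOn_of_preconnected_of_eventuallyEq (z₀ := 2)
    (f := mellin fun u : ℝ ↦ (((1 + Real.exp u)⁻¹ : ℝ) : ℂ))
    (g := fun z ↦ Gamma z * (1 - 2 ^ (1 - z)) * riemannZeta z)
    (DifferentiableOn.analyticOnNhd (fun z hz ↦ ?_) hU)
    (DifferentiableOn.analyticOnNhd (fun z hz ↦ ?_) hU)
    isPreconnected_re_pos_diff_one ⟨by simp, by norm_num⟩ ?_ ⟨hs, hs1⟩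
  · exact (differentiableAt_mellin_inv_one_add_exp hz.1).differentiableWithinAt
  · refine (((hGamma hz.1).mul ((differentiableAt_const _).sub ?_)).mul
      (differentiableAt_riemannZeta hz.2)).differentiableWithinAt
    exact ((differentiableAt_const _).sub differentiableAt_id).const_cpow (.inl two_ne_zero)
  · filter_upwards [(isOpen_lt continuous_const continuous_re).mem_nhds
      (show (1 : ℝ) < (2 : ℂ).re by norm_num)] with z hz
    exact mellin_inv_one_add_exp_of_one_lt_re hz

lemma one_sub_two_cpow_ne_zero {s : ℂ} (hs : s.re ≠ 1) : 1 - (2 : ℂ) ^ (1 - s) ≠ 0 := by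
  intro h
  have hnorm := congrArg norm (sub_eq_zero.mp h).symm
  rw [norm_one, ← ofReal_ofNat, norm_cpow_eq_rpow_re_of_pos two_pos, ← Real.rpow_zero 2,
    Real.rpow_right_inj two_pos (by norm_num), sub_re, one_re] at hnorm
  exact hs (by linarith)

lemma mellin_eq_integral_exp {E : Type*} [NormedAddCommGroup E] [NormedSpace ℂ E]
    (f : ℝ → E) (s : ℂ) :
    mellin f s = ∫ x : ℝ, cexp (s * x) • f (Real.exp x) := by
  rw [mellin, ← Real.range_exp, ← image_univ, integral_image_eq_integral_abs_deriv_smul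
    MeasurableSet.univ (fun x _ ↦ (Real.hasDerivAt_exp x).hasDerivWithinAt)
    Real.exp_injective.injOn, setIntegral_univ]
  congr 1 with x
  rw [abs_of_pos (Real.exp_pos x), ← smul_assoc, real_smul, ofReal_exp,
    cpow_def_of_ne_zero (exp_ne_zero _),
    log_exp (by simp [Real.pi_pos]) (by simp [Real.pi_pos.le]), ← Complex.exp_add]
  ring_nf

lemma integral_exp_mul_V_eq_mellin (σ t : ℝ) :
    ∫ x : ℝ, cexp (I * t * x) * ((Real.exp (σ * x) / (1 + Real.exp (Real.exp x)) : ℝ) : ℂ)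
      = mellin (fun u : ℝ ↦ (((1 + Real.exp u)⁻¹ : ℝ) : ℂ)) (σ + t * I) := by
  rw [mellin_eq_integral_exp]
  congr 1 with x
  push_cast
  rw [smul_eq_mul, div_eq_mul_inv, ← mul_assoc, ← Complex.exp_add]
  ring_nf

/-- For `0 < σ < 1` and `t ∈ ℝ`:
`ζ(σ+it) = 0` iff `∫_ℝ e^{itx} V_σ(x) dx = 0`. -/
theorem zeta_zero_iff_fourier_V_zero (σ t : ℝ) (hσ0 : 0 < σ) (hσ1 : σ < 1) :
    riemannZeta ((σ : ℂ) + t * Complex.I) = 0 ↔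
      ∫ x : ℝ, Complex.exp (Complex.I * t * x)
          * ((Real.exp (σ * x) / (1 + Real.exp (Real.exp x)) : ℝ) : ℂ) = 0 := by
  have hre : ((σ : ℂ) + t * I).re = σ := by simp
  have hs0 : 0 < ((σ : ℂ) + t * I).re := by rwa [hre]
  have hs1 : (σ : ℂ) + t * I ≠ 1 := fun h ↦ by rw [h, one_re] at hre; linarith
  rw [integral_exp_mul_V_eq_mellin, mellin_inv_one_add_exp hs0 hs1, mul_eq_zero, or_iff_right]
  exact mul_ne_zero (Gamma_ne_zero_of_re_pos hs0) (one_sub_two_cpow_ne_zero (by linarith))
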